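/- Let R be a Noetherian domain with fraction field K and let I ⊆ R be an ideal of height ≥ 2. Then, inside K: (1) the local hull Γ(Spec R ∖ V(I), O) = colim_n Hom_R(I^n, R) is contained in the hull ⋂_p R_p (intersection over all height-1 primes p of R); and (2) equality colim_n Hom_R(I^n, R) = ⋂_p R_p holds if and only if for every prime q ⊆ R with I ⊄ q one has depth_{R_q} R_q ≥ min(2, ht q), i.e., R is S2 away from V(I). -/

import Mathlib

universe u

/-- `depthGE R J M n` : there is a weakly regular sequence on `M` of length `n` with entries
in `J`.  For a Noetherian local ring `R` and a finite module `M` with `J • M ≠ M` this says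
exactly `depth_J M ≥ n` (and the zero module has depth `+∞`, so `depthGE` always holds
for it, matching the usual convention). -/
def depthGE (R : Type u) [CommRing R] (J : Ideal R)
    (M : Type u) [AddCommGroup M] [Module R M] (n : ℕ) : Prop :=
  ∃ rs : List R, rs.length = n ∧ (∀ r ∈ rs, r ∈ J) ∧
    RingTheory.Sequence.IsWeaklyRegular M rs

/-- The (Krull) dimension of a module: `dim (R / ann M)`. -/
noncomputable def moduleKrullDim (R : Type u) [CommRing R]
    (M : Type u) [AddCommGroup M] [Module R M] : WithBot ℕ∞ :=
  ringKrullDim (R ⧸ Module.annihilator R M)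

/-- Serre's condition `S2` for a finite module over a Noetherian ring:
`depth_{R_p} M_p ≥ min (2, dim M_p)` for every prime `p` in the support of `M`. -/
def IsS2 (R : Type u) [CommRing R] (M : Type u) [AddCommGroup M] [Module R M] : Prop :=
  ∀ p ∈ Module.support R M, ∀ n : ℕ,
    (n : WithBot ℕ∞) ≤ min 2 (moduleKrullDim (Localization.AtPrime p.asIdeal)
        (LocalizedModule p.asIdeal.primeCompl M)) →
      depthGE (Localization.AtPrime p.asIdeal)
        (IsLocalRing.maximalIdeal (Localization.AtPrime p.asIdeal))
        (LocalizedModule p.asIdeal.primeCompl M) n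
/-- The hull of a Noetherian domain `R`: the intersection `⋂_p R_p ⊆ K` over all height-1
primes `p` of `R`, inside the fraction field `K` (equal to `K` if there are no height-1
primes). -/
noncomputable def domainHull (R : Type u) [CommRing R] [IsDomain R] :
    Submodule R (FractionRing R) :=
  ⨅ (p : PrimeSpectrum R) (_ : Order.height p = 1),
    Subalgebra.toSubmodule (Localization.subalgebra (FractionRing R) p.asIdeal.primeCompl
      p.asIdeal.primeCompl_le_nonZeroDivisors)

/-- The local hull of a Noetherian domain `R` centered at `V(I)`, realized inside the
fraction field `K`: the union over `n` of `{x ∈ K | Iⁿ • x ⊆ R}`; it is canonically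
isomorphic to `colim_n Hom_R(Iⁿ, R) = Γ(Spec R ∖ V(I), O)`. -/
noncomputable def localHullInFrac (R : Type u) [CommRing R] [IsDomain R] (I : Ideal R) :
    Submodule R (FractionRing R) :=
  ⨆ n : ℕ, ((1 : Submodule R (FractionRing R)) /
    Submodule.map (Algebra.linearMap R (FractionRing R)) (I ^ n : Ideal R))

/-! Everything is read off the ideal `(R : x) = {a | a • x ∈ R}` of an element `x` of the
fraction field: `x` lies in the local hull iff `I ⊆ √(R : x)`, and `x ∈ R_p` iff `(R : x) ⊄ p`.
Part (1) follows because `I` lies in no height-one prime. If `R_Q` contains a regular sequence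
`r, s` and `Q` is minimal over `(R : x)`, then `r ^ m • x, s ^ n • x ∈ R_Q` for some `m, n`, and
since `r ^ m, s ^ n` is again regular this forces `x ∈ R_Q`, i.e. `(R : x) ⊄ Q`. Conversely, if
`ht q ≥ 2` but `R_q` has depth one, then the maximal ideal is associated to `R_q / (r)` for any
`0 ≠ r ∈ q`, so `q = (rR : w)` for some `w`, and `x = w / r` has `(R : x) = q`: it lies in the
hull but not in the local hull. -/

open IsLocalRing RingTheory.Sequence

section Colon

variable {A K : Type*} [CommRing A] [CommRing K] [Algebra A K]

lemma one_colon_singleton_ne_bot [Nontrivial A] [IsFractionRing A K] (x : K) :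
    (1 : Submodule A K).colon {x} ≠ ⊥ := by
  obtain ⟨⟨a, b⟩, hab⟩ := IsLocalization.surj (nonZeroDivisors A) x
  refine Submodule.ne_bot_iff _ |>.mpr ⟨b, ?_, nonZeroDivisors.coe_ne_zero b⟩
  rw [Submodule.mem_colon_singleton, Submodule.mem_one]
  exact ⟨a, by rw [Algebra.smul_def, mul_comm, hab]⟩

lemma mem_one_iff_not_colon_le (p : Ideal A) [p.IsPrime] (B : Type*) [CommRing B] [Algebra A B]
    [IsLocalization.AtPrime B p] [Algebra B K] [IsScalarTower A B K] (x : K) :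
    x ∈ (1 : Submodule B K) ↔ ¬ (1 : Submodule A K).colon {x} ≤ p := by
  simp only [Submodule.mem_one, SetLike.not_le_iff_exists, Submodule.mem_colon_singleton]
  constructor
  · rintro ⟨b, rfl⟩
    obtain ⟨a, s, rfl⟩ := IsLocalization.exists_mk'_eq p.primeCompl b
    refine ⟨s, ⟨a, ?_⟩, s.2⟩
    rw [Algebra.smul_def, IsScalarTower.algebraMap_apply A B K (s : A), ← map_mul,
      IsLocalization.mk'_spec', ← IsScalarTower.algebraMap_apply]
  · rintro ⟨s, ⟨a, ha⟩, hs⟩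
    let s' : p.primeCompl := ⟨s, hs⟩
    refine ⟨IsLocalization.mk' B a s', ?_⟩
    have hu : IsUnit (algebraMap A K s) := by
      rw [IsScalarTower.algebraMap_apply A B K]
      exact (IsLocalization.map_units B s').map _
    refine hu.mul_left_cancel ?_
    rw [← Algebra.smul_def s x, ← ha]
    change algebraMap A K (s' : A) * _ = _
    rw [IsScalarTower.algebraMap_apply A B K (s' : A), ← map_mul,
      IsLocalization.mk'_spec', ← IsScalarTower.algebraMap_apply]

end Colon

section RegularPair

variable {A : Type*} [CommRing A] {r s : A}

lemma isWeaklyRegular_pair_iff :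
    IsWeaklyRegular A [r, s] ↔
      IsSMulRegular A r ∧ ∀ a, s * a ∈ Ideal.span {r} → a ∈ Ideal.span {r} := by
  have hmk (a : A) : (Submodule.Quotient.mk a : QuotSMulTop r A) = 0 ↔ a ∈ Ideal.span {r} := by
    rw [Submodule.Quotient.mk_eq_zero, ← Submodule.ideal_span_singleton_smul, smul_eq_mul,
      Ideal.mul_top]
  rw [isWeaklyRegular_cons_iff, isWeaklyRegular_singleton_iff,
    isSMulRegular_iff_right_eq_zero_of_smul (M := QuotSMulTop r A)]
  refine and_congr_right fun _ => ⟨fun h a ha => ?_, fun h y hy => ?_⟩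
  · rw [← hmk]
    exact h _ (by rw [← Submodule.Quotient.mk_smul, hmk]; exact ha)
  · obtain ⟨a, rfl⟩ := Submodule.Quotient.mk_surjective _ y
    rw [← Submodule.Quotient.mk_smul, hmk] at hy
    exact (hmk a).mpr (h a hy)

lemma RingTheory.Sequence.IsWeaklyRegular.pow_right (h : IsWeaklyRegular A [r, s]) (n : ℕ) :
    IsWeaklyRegular A [r, s ^ n] := by
  obtain ⟨hr, hs⟩ := isWeaklyRegular_pair_iff.mp h
  refine isWeaklyRegular_pair_iff.mpr ⟨hr, fun a ha => ?_⟩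
  induction n generalizing a with
  | zero => simpa using ha
  | succ n ih => exact hs a (ih _ (by rwa [← mul_assoc, ← pow_succ]))

lemma RingTheory.Sequence.IsWeaklyRegular.pow_left (h : IsWeaklyRegular A [r, s]) (m : ℕ) :
    IsWeaklyRegular A [r ^ m, s] := by
  obtain ⟨hr, hs⟩ := isWeaklyRegular_pair_iff.mp h
  refine isWeaklyRegular_pair_iff.mpr ⟨hr.pow m, fun a ha => ?_⟩
  induction m generalizing a with
  | zero => simp
  | succ m ih =>
    obtain ⟨b, hb⟩ := Ideal.mem_span_singleton'.mp ha
    obtain ⟨c, rfl⟩ := Ideal.mem_span_singleton'.mp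
      (hs a (Ideal.mem_span_singleton'.mpr ⟨b * r ^ m, by rw [← hb]; ring⟩))
    have hc : s * c = b * r ^ m := hr (by simp only [smul_eq_mul]; linear_combination -hb)
    obtain ⟨d, rfl⟩ := Ideal.mem_span_singleton'.mp (ih c (hc ▸ Ideal.mul_mem_left _ _
      (Ideal.mem_span_singleton_self _)))
    exact Ideal.mem_span_singleton'.mpr ⟨d, by ring⟩

lemma RingTheory.Sequence.IsWeaklyRegular.pow_pair (h : IsWeaklyRegular A [r, s]) (m n : ℕ) :
    IsWeaklyRegular A [r ^ m, s ^ n] :=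
  (h.pow_right n).pow_left m

variable {K : Type*} [CommRing K] [Algebra A K] [IsFractionRing A K]

lemma mem_one_of_isWeaklyRegular (hrs : IsWeaklyRegular A [r, s]) {x : K}
    (hr : r ∈ (1 : Submodule A K).colon {x}) (hs : s ∈ (1 : Submodule A K).colon {x}) :
    x ∈ (1 : Submodule A K) := by
  obtain ⟨hr_reg, hs_reg⟩ := isWeaklyRegular_pair_iff.mp hrs
  rw [Submodule.mem_colon_singleton, Submodule.mem_one] at hr hs
  obtain ⟨a, ha⟩ := hr
  obtain ⟨b, hb⟩ := hs
  have hab : s * a = b * r := IsFractionRing.injective A K <| by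
    rw [map_mul, map_mul, ha, hb, Algebra.smul_def, Algebra.smul_def]; ring
  obtain ⟨c, rfl⟩ := Ideal.mem_span_singleton'.mp
    (hs_reg a (hab ▸ Ideal.mem_span_singleton'.mpr ⟨b, rfl⟩))
  have hr_nzd : r ∈ nonZeroDivisors A :=
    (isLeftRegular_iff_isRegular.mp (isLeftRegular_iff.mpr hr_reg)).mem_nonZeroDivisors
  have hu : IsUnit (algebraMap A K r) :=
    IsLocalization.map_units K (⟨r, hr_nzd⟩ : nonZeroDivisors A)
  refine Submodule.mem_one.mpr ⟨c, hu.mul_left_cancel ?_⟩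
  rw [← Algebra.smul_def r x, ← ha, map_mul, mul_comm]

lemma mem_one_of_isWeaklyRegular_of_mem_radical (hrs : IsWeaklyRegular A [r, s]) {x : K}
    (hr : r ∈ ((1 : Submodule A K).colon {x}).radical)
    (hs : s ∈ ((1 : Submodule A K).colon {x}).radical) :
    x ∈ (1 : Submodule A K) := by
  obtain ⟨m, hm⟩ := hr
  obtain ⟨n, hn⟩ := hs
  exact mem_one_of_isWeaklyRegular (hrs.pow_pair m n) hm hn

end RegularPair

lemma IsLocalRing.exists_mem_maximalIdeal_isSMulRegular {A : Type*} [CommRing A] [IsLocalRing A]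
    [IsNoetherianRing A] (M : Type*) [AddCommGroup M] [Module A M] [Module.Finite A M]
    (h : maximalIdeal A ∉ associatedPrimes A M) : ∃ σ ∈ maximalIdeal A, IsSMulRegular M σ := by
  by_contra! hreg
  have hcover : (maximalIdeal A : Set A) ⊆ ⋃ p ∈ associatedPrimes A M, p := by
    rw [biUnion_associatedPrimes_eq_compl_regular]
    exact hreg
  obtain ⟨p, hp, hle⟩ := (Ideal.subset_union_prime_finite (associatedPrimes.finite A M) ⊥ ⊥
    fun p hp _ _ => hp.isPrime).mp hcover
  exact h (((maximalIdeal.isMaximal A).eq_of_le hp.isPrime.ne_top hle) ▸ hp)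

open Module.associatedPrimes Pointwise in
lemma mem_associatedPrimes_quotient_of_maximalIdeal_mem {R : Type*} [CommRing R]
    [IsNoetherianRing R] (p : Ideal R) [p.IsPrime] (r : R)
    (h : maximalIdeal (Localization.AtPrime p) ∈ associatedPrimes (Localization.AtPrime p)
      (QuotSMulTop (algebraMap R (Localization.AtPrime p) r) (Localization.AtPrime p))) :
    p ∈ associatedPrimes R (R ⧸ Ideal.span {r}) := by
  let f := Algebra.linearMap R (Localization.AtPrime p)
  have hloc : (Ideal.span {r}).localized' (Localization.AtPrime p) p.primeCompl f =
      algebraMap R (Localization.AtPrime p) r • ⊤ := by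
    rw [Submodule.localized'_span, Set.image_singleton, ← Submodule.ideal_span_singleton_smul,
      smul_eq_mul, Ideal.mul_top]
    rfl
  rw [LinearEquiv.AssociatedPrimes.eq (Submodule.quotEquivOfEq _ _ hloc.symm)] at h
  have := comap_mem_associatedPrimes_of_mem_associatedPrimes_of_isLocalizedModule_of_fg p.primeCompl
    ((Ideal.span {r}).toLocalizedQuotient' (Localization.AtPrime p) p.primeCompl f) _ h
    (IsNoetherian.noetherian _)
  rwa [← Ideal.under_def, Localization.AtPrime.under_maximalIdeal] at this

lemma exists_colon_eq_of_mem_associatedPrimes {R : Type*} [CommRing R] [IsDomain R]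
    [IsNoetherianRing R] {p : Ideal R} {r : R} (hr : r ≠ 0)
    (hp : p ∈ associatedPrimes R (R ⧸ Ideal.span {r})) :
    ∃ x : FractionRing R, (1 : Submodule R (FractionRing R)).colon {x} = p := by
  obtain ⟨-, w, hw⟩ := isAssociatedPrime_iff.mp hp
  obtain ⟨w, rfl⟩ := Submodule.Quotient.mk_surjective _ w
  have hr' : algebraMap R (FractionRing R) r ≠ 0 :=
    (map_ne_zero_iff _ (IsFractionRing.injective R _)).mpr hr
  refine ⟨algebraMap R _ w / algebraMap R _ r, ?_⟩
  ext a
  rw [hw, Submodule.mem_colon_singleton, Submodule.mem_colon_singleton, Submodule.mem_bot,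
    ← Submodule.Quotient.mk_smul, Submodule.Quotient.mk_eq_zero, Submodule.mem_one,
    smul_eq_mul, Ideal.mem_span_singleton']
  refine exists_congr fun b => ?_
  rw [Algebra.smul_def, mul_div_assoc', eq_div_iff hr', ← map_mul, ← map_mul,
    (IsFractionRing.injective R _).eq_iff]

lemma depthGE_one_of_ne_bot {A : Type u} [CommRing A] [IsDomain A] {J : Ideal A} (hJ : J ≠ ⊥) :
    depthGE A J A 1 := by
  obtain ⟨r, hr, hr0⟩ := Submodule.exists_mem_ne_zero_of_ne_bot hJ
  exact ⟨[r], rfl, by simpa using hr,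
    (isWeaklyRegular_singleton_iff A r).mpr (isLeftRegular_iff.mp (IsRegular.of_ne_zero hr0).left)⟩

lemma PrimeSpectrum.height_eq_zero_iff_asIdeal_eq_bot {R : Type*} [CommRing R] [IsDomain R]
    (q : PrimeSpectrum R) : Order.height q = 0 ↔ q.asIdeal = ⊥ := by
  rw [← PrimeSpectrum.height_eq_orderHeight, Ideal.height_eq_zero_iff_eq_bot]

section Hull

variable {R : Type u} [CommRing R] [IsDomain R]

lemma mem_localHullInFrac_iff {I : Ideal R} {x : FractionRing R} :
    x ∈ localHullInFrac R I ↔ ∃ n, I ^ n ≤ (1 : Submodule R (FractionRing R)).colon {x} := by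
  have hmem (n : ℕ) (y : FractionRing R) : y ∈ (1 : Submodule R (FractionRing R)) /
      Submodule.map (Algebra.linearMap R (FractionRing R)) (I ^ n : Ideal R) ↔
        I ^ n ≤ (1 : Submodule R (FractionRing R)).colon {y} := by
    simp only [Submodule.mem_div_iff_forall_mul_mem, Submodule.mem_map, forall_exists_index,
      and_imp, forall_apply_eq_imp_iff₂, SetLike.le_def, Submodule.mem_colon_singleton,
      Algebra.linearMap_apply, Algebra.smul_def, mul_comm]
  have hmono : Monotone fun n : ℕ => (1 : Submodule R (FractionRing R)) /
      Submodule.map (Algebra.linearMap R (FractionRing R)) (I ^ n : Ideal R) :=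
    fun m n hmn y hy => (hmem n y).mpr ((Ideal.pow_le_pow_right hmn).trans ((hmem m y).mp hy))
  rw [localHullInFrac, Submodule.mem_iSup_of_directed _ hmono.directed_le]
  exact exists_congr fun n => hmem n x

lemma mem_localHullInFrac_iff_le_radical [IsNoetherianRing R] {I : Ideal R}
    {x : FractionRing R} :
    x ∈ localHullInFrac R I ↔ I ≤ ((1 : Submodule R (FractionRing R)).colon {x}).radical := by
  rw [mem_localHullInFrac_iff]
  exact ⟨fun ⟨n, hn⟩ a ha => ⟨n, hn (Ideal.pow_mem_pow ha n)⟩,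
    fun h => Ideal.exists_pow_le_of_le_radical_of_fg h (IsNoetherian.noetherian I)⟩

lemma mem_domainHull_iff {x : FractionRing R} :
    x ∈ domainHull R ↔ ∀ p : PrimeSpectrum R, Order.height p = 1 →
      ¬ (1 : Submodule R (FractionRing R)).colon {x} ≤ p.asIdeal := by
  simp only [domainHull, Submodule.mem_iInf, Subalgebra.mem_toSubmodule]
  refine forall_congr' fun p => forall_congr' fun _ => ?_
  rw [← mem_one_iff_not_colon_le p.asIdeal (Localization.subalgebra (FractionRing R)
    p.asIdeal.primeCompl p.asIdeal.primeCompl_le_nonZeroDivisors), Submodule.mem_one]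
  simp

lemma localHullInFrac_le_domainHull {I : Ideal R}
    (hht : ∀ p : PrimeSpectrum R, I ≤ p.asIdeal → 2 ≤ Order.height p) :
    localHullInFrac R I ≤ domainHull R := by
  intro x hx
  obtain ⟨n, hn⟩ := mem_localHullInFrac_iff.mp hx
  refine mem_domainHull_iff.mpr fun p hp hle => ?_
  have := hht p (p.2.le_of_pow_le (hn.trans hle))
  rw [hp] at this
  exact absurd this (by norm_num)

lemma two_le_height_of_mem_minimalPrimes_colon {x : FractionRing R} (hx : x ∈ domainHull R)
    (q : PrimeSpectrum R)
    (hq : q.asIdeal ∈ ((1 : Submodule R (FractionRing R)).colon {x}).minimalPrimes) :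
    2 ≤ Order.height q := by
  have h0 : Order.height q ≠ 0 := by
    rw [Ne, q.height_eq_zero_iff_asIdeal_eq_bot]
    exact fun h => one_colon_singleton_ne_bot x (le_bot_iff.mp (h ▸ hq.1.2))
  have h1 : Order.height q ≠ 1 := fun h => mem_domainHull_iff.mp hx q h hq.1.2
  exact one_add_one_eq_two (R := ℕ∞) ▸
    Order.add_one_le_of_lt (lt_of_le_of_ne (Order.one_le_iff_ne_zero.mpr h0) (Ne.symm h1))

lemma not_depthGE_two_of_mem_minimalPrimes_colon [IsNoetherianRing R] {x : FractionRing R}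
    (q : PrimeSpectrum R)
    (hq : q.asIdeal ∈ ((1 : Submodule R (FractionRing R)).colon {x}).minimalPrimes) :
    ¬ depthGE (Localization.AtPrime q.asIdeal) (maximalIdeal (Localization.AtPrime q.asIdeal))
      (Localization.AtPrime q.asIdeal) 2 := by
  rintro ⟨rs, hlen, hmem, hreg⟩
  obtain ⟨r, s, rfl⟩ := List.length_eq_two.mp hlen
  set J := (1 : Submodule R (FractionRing R)).colon {x}
  have hrad : maximalIdeal (Localization.AtPrime q.asIdeal) ≤
      (J.map (algebraMap R (Localization.AtPrime q.asIdeal))).radical := by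
    rw [IsLocalization.AtPrime.radical_map_of_mem_minimalPrimes _ q.asIdeal J hq,
      Localization.AtPrime.map_eq_maximalIdeal]
  have hmap : J.map (algebraMap R (Localization.AtPrime q.asIdeal)) ≤
      (1 : Submodule (Localization.AtPrime q.asIdeal) (FractionRing R)).colon {x} := by
    refine Ideal.map_le_iff_le_comap.mpr fun a ha => ?_
    obtain ⟨b, hb⟩ := Submodule.mem_one.mp (Submodule.mem_colon_singleton.mp ha)
    rw [Ideal.mem_comap, Submodule.mem_colon_singleton, algebraMap_smul]
    exact Submodule.mem_one.mpr ⟨algebraMap R _ b, by rw [← IsScalarTower.algebraMap_apply, hb]⟩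
  have hx := mem_one_of_isWeaklyRegular_of_mem_radical hreg
    (Ideal.radical_mono hmap (hrad (hmem r (by simp))))
    (Ideal.radical_mono hmap (hrad (hmem s (by simp))))
  exact (mem_one_iff_not_colon_le q.asIdeal _ x).mp hx hq.1.2

lemma depthGE_two_of_domainHull_le [IsNoetherianRing R] {I : Ideal R}
    (h : domainHull R ≤ localHullInFrac R I) (q : PrimeSpectrum R) (hIq : ¬ I ≤ q.asIdeal)
    (hq : 2 ≤ Order.height q) :
    depthGE (Localization.AtPrime q.asIdeal) (maximalIdeal (Localization.AtPrime q.asIdeal))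
      (Localization.AtPrime q.asIdeal) 2 := by
  have hq0 : q.asIdeal ≠ ⊥ := by
    rw [Ne, ← q.height_eq_zero_iff_asIdeal_eq_bot]
    intro h0
    rw [h0] at hq
    exact absurd hq (by norm_num)
  obtain ⟨r, hrq, hr0⟩ := Submodule.exists_mem_ne_zero_of_ne_bot hq0
  set ρ := algebraMap R (Localization.AtPrime q.asIdeal) r
  have hρ0 : ρ ≠ 0 := (map_ne_zero_iff _
    (IsLocalization.injective _ q.asIdeal.primeCompl_le_nonZeroDivisors)).mpr hr0
  have hass : maximalIdeal (Localization.AtPrime q.asIdeal) ∉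
      associatedPrimes _ (QuotSMulTop ρ (Localization.AtPrime q.asIdeal)) := by
    intro hass
    obtain ⟨x, hx⟩ := exists_colon_eq_of_mem_associatedPrimes hr0
      (mem_associatedPrimes_quotient_of_maximalIdeal_mem q.asIdeal r hass)
    have hxhull : x ∈ domainHull R := mem_domainHull_iff.mpr fun p hp hle => by
      have := Order.height_mono (show q ≤ p by rwa [← PrimeSpectrum.asIdeal_le_asIdeal, ← hx])
      rw [hp] at this
      exact absurd (hq.trans this) (by norm_num)
    have := mem_localHullInFrac_iff_le_radical.mp (h hxhull)
    rw [hx, q.2.radical] at this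
    exact hIq this
  obtain ⟨σ, hσm, hσ⟩ := exists_mem_maximalIdeal_isSMulRegular _ hass
  have hρm : ρ ∈ maximalIdeal _ :=
    (IsLocalization.AtPrime.to_map_mem_maximal_iff _ q.asIdeal r).mpr hrq
  refine ⟨[ρ, σ], rfl, fun a ha => ?_, ?_⟩
  · rcases List.mem_pair.mp ha with rfl | rfl
    exacts [hρm, hσm]
  · exact (isWeaklyRegular_cons_iff _ _ _).mpr ⟨isLeftRegular_iff.mp
      (IsRegular.of_ne_zero hρ0).left, (isWeaklyRegular_singleton_iff _ _).mpr hσ⟩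

lemma depthGE_of_domainHull_le [IsNoetherianRing R] {I : Ideal R}
    (h : domainHull R ≤ localHullInFrac R I) (q : PrimeSpectrum R) (hIq : ¬ I ≤ q.asIdeal)
    (n : ℕ) (hn : (n : ℕ∞) ≤ min 2 (Order.height q)) :
    depthGE (Localization.AtPrime q.asIdeal) (maximalIdeal (Localization.AtPrime q.asIdeal))
      (Localization.AtPrime q.asIdeal) n := by
  have hn2 : n ≤ 2 := by exact_mod_cast hn.trans (min_le_left _ _)
  have hnq : (n : ℕ∞) ≤ Order.height q := hn.trans (min_le_right _ _)
  interval_cases n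
  · exact ⟨[], rfl, by simp, .nil _ _⟩
  · refine depthGE_one_of_ne_bot fun hm => ?_
    have hq : q.asIdeal = ⊥ := by
      rw [← Localization.AtPrime.under_maximalIdeal (I := q.asIdeal), hm, Ideal.under_def,
        Ideal.comap_bot_of_injective _
          (IsLocalization.injective _ q.asIdeal.primeCompl_le_nonZeroDivisors)]
    rw [(q.height_eq_zero_iff_asIdeal_eq_bot).mpr hq] at hnq
    exact absurd hnq (by norm_num)
  · exact depthGE_two_of_domainHull_le h q hIq hnq

end Hull

/-- Let `R` be a Noetherian domain with fraction field `K` and `I ⊆ R` an ideal of height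
≥ 2.  Then, inside `K`: (1) the local hull `colim_n Hom_R(Iⁿ, R)` is contained in the hull
`⋂_p R_p` (intersection over height-1 primes); (2) equality holds iff for every prime `q`
with `I ⊄ q` one has `depth_{R_q} R_q ≥ min (2, ht q)`, i.e. `R` is `S2` away from `V(I)`. -/
theorem local_hull_le_domain_hull_and_eq_iff
    (R : Type u) [CommRing R] [IsDomain R] [IsNoetherianRing R]
    (I : Ideal R) (hht : ∀ p : PrimeSpectrum R, I ≤ p.asIdeal → 2 ≤ Order.height p) :
    localHullInFrac R I ≤ domainHull R ∧
      (localHullInFrac R I = domainHull R ↔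
        ∀ q : PrimeSpectrum R, ¬ I ≤ q.asIdeal →
          ∀ n : ℕ, (n : ℕ∞) ≤ min 2 (Order.height q) →
            depthGE (Localization.AtPrime q.asIdeal)
              (IsLocalRing.maximalIdeal (Localization.AtPrime q.asIdeal))
              (Localization.AtPrime q.asIdeal) n) := by
  have hle := localHullInFrac_le_domainHull hht
  refine ⟨hle, fun heq => depthGE_of_domainHull_le heq.ge, fun hS2 => le_antisymm hle ?_⟩
  intro x hx
  rw [mem_localHullInFrac_iff_le_radical, ← Ideal.sInf_minimalPrimes]
  refine le_sInf fun Q hQ => by_contra fun hIQ => ?_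
  let q : PrimeSpectrum R := ⟨Q, hQ.1.1⟩
  exact not_depthGE_two_of_mem_minimalPrimes_colon q hQ
    (hS2 q hIQ 2 (le_min le_rfl (two_le_height_of_mem_minimalPrimes_colon hx q hQ)))
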